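/- Let n ≥ 2, let R = ℝ⟦t⟧ be the ring of formal power series over ℝ, M = Fin (2n) → R, and Ω_R the standard symplectic R-bilinear form on M. Let B : M → End_R(M) be an R-linear map with Ω_R(B(X)Y,Z) totally symmetric in (X,Y,Z), encoding a formal curve of translation-invariant symplectic connections. If B is of Ricci type, then B(X)∘B(Y) = 0 for all X,Y ∈ M; in particular the formal curvature B(X)∘B(Y) − B(Y)∘B(X) and the formal Ricci tensor Tr(B(X)∘B(Y)) vanish identically (the formal curve of connections is flat). -/

import Mathlib

/-!
Write `r X Y = tr (B X ∘ B Y)` and let `ρ` be the Ricci endomorphism, `ω (ρ a) T = r a T`.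
Polarising the Ricci-type identity with the total symmetry of `ω (B X Y) Z` gives the formula
`c • B X (B Y Z) = -(ω X Y • ρ Z + ω X Z • ρ Y - r X Z • Y - r X Y • Z)`, `c = 2 (n + 1)`.
Computing `r (B Y Z) V` through it, as the trace of a sum of rank-one maps, gives a cyclic
linear system for the values `ω (B X Y) (ρ Z)`, which is nonsingular because `c + 2` and
`c - 4 = 2 (n - 1)` are nonzero. So `B X ∘ ρ = 0` and `r (B X Y) = 0`, and applying `B X` to the
formula yields `r X Y • B Z = r Y Z • B X`. Taking `X := B Y U` there gives
`r X Y • (B X ∘ B Y) = 0`, whose trace is `r X Y ^ 2`; hence `r = 0`, and the formula collapses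
to `B X ∘ B Y = 0`.
-/

noncomputable section

/-- The standard symplectic `R`-bilinear form on `M = Fin (2n) → R`, `R = ℝ⟦t⟧`:
`Ω_R(x,y) = Σ_{i=1}^{n} (x_i·y_{n+i} − x_{n+i}·y_i)`. -/
def OmegaR (n : ℕ) (x y : Fin (2*n) → PowerSeries ℝ) : PowerSeries ℝ :=
  ∑ i : Fin n, (x ⟨i.1, by have := i.isLt; omega⟩ * y ⟨n + i.1, by have := i.isLt; omega⟩
    - x ⟨n + i.1, by have := i.isLt; omega⟩ * y ⟨i.1, by have := i.isLt; omega⟩)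

open LinearMap (trace)

theorem eq_zero_of_cyclic_system {R : Type*} [CommRing R] [NoZeroDivisors R] {c p q s : R}
    (hc₂ : c + 2 ≠ 0) (hc₄ : c - 4 ≠ 0) (hp : c * p = 2 * q + 2 * s)
    (hq : c * q = 2 * s + 2 * p) (hs : c * s = 2 * p + 2 * q) : p = 0 := by
  have hpq : p - q = 0 :=
    (mul_eq_zero.1 (by linear_combination hp - hq : (c + 2) * (p - q) = 0)).resolve_left hc₂
  have hps : p - s = 0 :=
    (mul_eq_zero.1 (by linear_combination hp - hs : (c + 2) * (p - s) = 0)).resolve_left hc₂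
  have hp' : (c - 4) * p = 0 := by linear_combination hp - 2 * hpq - 2 * hps
  exact (mul_eq_zero.1 hp').resolve_left hc₄

namespace SymplecticConnection

variable {R M : Type*} [CommRing R] [AddCommGroup M] [Module R M]

def ricci (B : M →ₗ[R] Module.End R M) : LinearMap.BilinForm R M :=
  ((LinearMap.mul R (Module.End R M)).compl₁₂ B B).compr₂ (trace R M)

@[simp]
theorem ricci_apply (B : M →ₗ[R] Module.End R M) (X Y : M) :
    ricci B X Y = trace R M (B X * B Y) :=
  rfl

theorem ricci_comm (B : M →ₗ[R] Module.End R M) (X Y : M) : ricci B X Y = ricci B Y X :=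
  LinearMap.trace_mul_comm R _ _

structure IsTotallySymmetric (ω : LinearMap.BilinForm R M) (B : M →ₗ[R] Module.End R M) :
    Prop where
  comm : ∀ X Y Z, ω (B X Y) Z = ω (B Y X) Z
  swap : ∀ X Y Z, ω (B X Y) Z = ω (B X Z) Y

-- The Ricci-type curvature identity multiplied through by `c`, which is `2 (n + 1)` in
-- dimension `2 n`.
def IsRicciType (ω : LinearMap.BilinForm R M) (B : M →ₗ[R] Module.End R M) (c : R) : Prop :=
  ∀ X Y Z T, c * ω ((B X * B Y - B Y * B X) Z) T =
    -(2 * ω X Y * ricci B Z T + ω X Z * ricci B Y T + ω X T * ricci B Y Z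
      - ω Y Z * ricci B X T - ω Y T * ricci B X Z)

variable {ω : LinearMap.BilinForm R M} {B : M →ₗ[R] Module.End R M}

theorem ricci_eq_neg_omega (hω : ω.IsAlt) {ρ : M → M} (hρ : ∀ a T, ω (ρ a) T = ricci B a T)
    (X Y : M) : ricci B X Y = -ω X (ρ Y) := by
  rw [ricci_comm, ← hρ, hω.neg_eq]

namespace IsTotallySymmetric

theorem apply_comm (hB : IsTotallySymmetric ω B) (hsep : ω.SeparatingLeft) (X Y : M) :
    B X Y = B Y X :=
  sub_eq_zero.1 <| hsep _ fun Z => by rw [map_sub, LinearMap.sub_apply, hB.comm, sub_self]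

theorem omega_rotate (hB : IsTotallySymmetric ω B) (X Y Z : M) :
    ω (B X Y) Z = ω (B Z Y) X := by
  rw [hB.swap, hB.comm, hB.swap]

theorem omega_apply_left (hB : IsTotallySymmetric ω B) (hω : ω.IsAlt) (X u v : M) :
    ω (B X u) v = -ω u (B X v) := by
  rw [hB.swap, hω.neg_eq u]

theorem omega_apply_apply (hB : IsTotallySymmetric ω B) (hω : ω.IsAlt)
    (hsep : ω.SeparatingLeft) (X Y Z T : M) :
    ω (B Y (B X Z)) T = -ω (B X (B T Y)) Z := by
  rw [hB.omega_apply_left hω, hB.omega_apply_left hω, neg_neg, hω.neg_eq, hB.apply_comm hsep Y]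

end IsTotallySymmetric

namespace IsRicciType

variable {c : R}

theorem smul_omega_apply_apply [NoZeroDivisors R] (hR : IsRicciType ω B c)
    (hB : IsTotallySymmetric ω B) (hω : ω.IsAlt) (hsep : ω.SeparatingLeft) (h2 : (2 : R) ≠ 0)
    (X Y Z T : M) :
    c * ω (B X (B Y Z)) T = -(ω X Y * ricci B Z T + ω X Z * ricci B Y T
      - ω Y T * ricci B X Z - ω Z T * ricci B X Y) := by
  have h : ∀ Y Z T, c * (ω (B X (B Y Z)) T + ω (B X (B T Y)) Z) =
      -(2 * ω X Y * ricci B Z T + ω X Z * ricci B Y T + ω X T * ricci B Y Z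
        - ω Y Z * ricci B X T - ω Y T * ricci B X Z) := by
    intro Y Z T
    have h := hR X Y Z T
    rw [LinearMap.sub_apply, Module.End.mul_apply, Module.End.mul_apply, map_sub,
      LinearMap.sub_apply, hB.omega_apply_apply hω hsep X Y Z T] at h
    linear_combination h
  -- `h Y Z T - h T Y Z + h Z T Y` telescopes to `2 * c * ω (B X (B Y Z)) T`.
  refine mul_left_cancel₀ h2 ?_
  linear_combination h Y Z T - h T Y Z + h Z T Y + ω X Y * ricci_comm B T Z
    + ω X Z * ricci_comm B Y T + ω X T * ricci_comm B Y Z + ricci B X Z * hω.neg_eq Y T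
    + ricci B X Y * hω.neg_eq Z T - ricci B X T * hω.neg_eq Y Z

section RicciEndomorphism

variable [NoZeroDivisors R] (hR : IsRicciType ω B c) (hB : IsTotallySymmetric ω B)
  (hω : ω.IsAlt) (hsep : ω.SeparatingLeft) (h2 : (2 : R) ≠ 0)
  {ρ : M → M} (hρ : ∀ a T, ω (ρ a) T = ricci B a T)
include hR hB hω hsep h2 hρ

theorem smul_apply_apply (X Y Z : M) :
    c • B X (B Y Z) = -(ω X Y • ρ Z + ω X Z • ρ Y - ricci B X Z • Y - ricci B X Y • Z) :=
  sub_eq_zero.1 <| hsep _ fun T => by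
    simp only [map_sub, map_neg, map_add, map_smul, LinearMap.sub_apply, LinearMap.neg_apply,
      LinearMap.add_apply, LinearMap.smul_apply, smul_eq_mul, hρ]
    linear_combination hR.smul_omega_apply_apply hB hω hsep h2 X Y Z T

theorem smul_ricci_apply_apply [Module.Free R M] [Module.Finite R M] (Y Z V : M) :
    c * ricci B (B Y Z) V = -(ω (B V (ρ Z)) Y + ω (B V (ρ Y)) Z
      - ricci B (B V Y) Z - ricci B (B V Z) Y) := by
  -- `smul_apply_apply` at `X = B V w` writes `c • (B (B Y Z) ∘ B V)` as a sum of rank-one maps.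
  have h : c • (B (B Y Z) * B V) = -((ω.flip Y ∘ₗ B V).smulRight (ρ Z)
      + (ω.flip Z ∘ₗ B V).smulRight (ρ Y) - ((ricci B).flip Z ∘ₗ B V).smulRight Y
      - ((ricci B).flip Y ∘ₗ B V).smulRight Z) := by
    ext w
    rw [LinearMap.smul_apply, Module.End.mul_apply, hB.apply_comm hsep,
      hR.smul_apply_apply hB hω hsep h2 hρ]
    simp
  simpa using congrArg (trace R M) h

theorem smul_omega_apply_rho [Module.Free R M] [Module.Finite R M] (X Y Z : M) :
    c * ω (B X Y) (ρ Z) = 2 * ω (B Z X) (ρ Y) + 2 * ω (B Z Y) (ρ X) := by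
  have h := hR.smul_ricci_apply_apply hB hω hsep h2 hρ X Y Z
  rw [ricci_eq_neg_omega hω hρ, ricci_eq_neg_omega hω hρ, ricci_eq_neg_omega hω hρ,
    hB.swap Z (ρ Y), hB.swap Z (ρ X)] at h
  linear_combination -h

variable [Module.Free R M] [Module.Finite R M] (hc₂ : c + 2 ≠ 0) (hc₄ : c - 4 ≠ 0)
include hc₂ hc₄

theorem omega_apply_rho_eq_zero (X Y Z : M) : ω (B X Y) (ρ Z) = 0 := by
  have h := hR.smul_omega_apply_rho hB hω hsep h2 hρ
  refine eq_zero_of_cyclic_system (q := ω (B Y Z) (ρ X)) (s := ω (B Z X) (ρ Y)) hc₂ hc₄ ?_ ?_ ?_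
  · linear_combination h X Y Z + 2 * hB.comm Z Y (ρ X)
  · linear_combination h Y Z X + 2 * hB.comm X Z (ρ Y)
  · linear_combination h Z X Y + 2 * hB.comm Y X (ρ Z)

theorem ricci_apply_apply_eq_zero (X Y Z : M) : ricci B (B X Y) Z = 0 := by
  rw [ricci_eq_neg_omega hω hρ, hR.omega_apply_rho_eq_zero hB hω hsep h2 hρ hc₂ hc₄,
    neg_zero]

theorem apply_rho_eq_zero (X Z : M) : B X (ρ Z) = 0 :=
  hsep _ fun V => by rw [hB.swap, hR.omega_apply_rho_eq_zero hB hω hsep h2 hρ hc₂ hc₄]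

theorem ricci_mul_omega_comm (X Y Z W V : M) :
    ricci B X Y * ω (B Z W) V = ricci B Y Z * ω (B X W) V := by
  -- `key` equates two computations of `c * ω (B X (B Y (B Z W))) V`.
  have key : ∀ X Z, ω (B Z W) X * ricci B Y V + ricci B X Y * ω (B Z W) V =
      ricci B Y W * ω (B X Z) V + ricci B Y Z * ω (B X W) V := by
    intro X Z
    have h₁ := hR.smul_omega_apply_apply hB hω hsep h2 X Y (B Z W) V
    have h₂ := congrArg (fun u => ω (B X u) V) (hR.smul_apply_apply hB hω hsep h2 hρ Y Z W)
    simp only [map_smul, map_neg, map_sub, map_add, LinearMap.smul_apply, LinearMap.neg_apply,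
      LinearMap.sub_apply, LinearMap.add_apply, smul_eq_mul,
      hR.apply_rho_eq_zero hB hω hsep h2 hρ hc₂ hc₄, map_zero, LinearMap.zero_apply] at h₂
    rw [hR.ricci_apply_apply_eq_zero hB hω hsep h2 hρ hc₂ hc₄, ricci_comm B X,
      hR.ricci_apply_apply_eq_zero hB hω hsep h2 hρ hc₂ hc₄] at h₁
    linear_combination h₂ - h₁ - ricci B Y V * hω.neg_eq X (B Z W)
  refine mul_left_cancel₀ h2 ?_
  linear_combination key X Z - key Z X + ricci B Y V * hB.omega_rotate X W Z
    + ricci B Y W * hB.comm X Z V + ω (B X W) V * ricci_comm B Z Y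
    - ω (B Z W) V * ricci_comm B Y X

theorem ricci_eq_zero (X Y : M) : ricci B X Y = 0 := by
  -- `ricci_mul_omega_comm` at `X := B Y U` has vanishing left-hand side.
  have h : ricci B X Y • (B X * B Y) = 0 := LinearMap.ext fun U => hsep _ fun V => by
    have := hR.ricci_mul_omega_comm hB hω hsep h2 hρ hc₂ hc₄ (B Y U) X Y X V
    rw [hR.ricci_apply_apply_eq_zero hB hω hsep h2 hρ hc₂ hc₄, zero_mul,
      hB.apply_comm hsep (B Y U) X] at this
    simpa using this.symm
  simpa using congrArg (trace R M) h

end RicciEndomorphism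

theorem mul_eq_zero [NoZeroDivisors R] [Module.Free R M] [Module.Finite R M]
    (hR : IsRicciType ω B c) (hB : IsTotallySymmetric ω B) (hω : ω.IsAlt)
    (hsep : ω.SeparatingLeft) (hsurj : Function.Surjective ω) (h2 : (2 : R) ≠ 0) (hc : c ≠ 0)
    (hc₂ : c + 2 ≠ 0) (hc₄ : c - 4 ≠ 0) (X Y : M) : B X * B Y = 0 := by
  choose ρ hρ using fun a => hsurj (ricci B a)
  have hr := hR.ricci_eq_zero hB hω hsep h2 (fun a T => by rw [hρ]) hc₂ hc₄
  refine LinearMap.ext fun Z => hsep _ fun T => ?_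
  have h := hR.smul_omega_apply_apply hB hω hsep h2 X Y Z T
  simp only [hr, mul_zero, sub_zero, add_zero, neg_zero] at h
  simpa using (_root_.mul_eq_zero.1 h).resolve_left hc

end IsRicciType

end SymplecticConnection

open SymplecticConnection

section OmegaR

variable {n : ℕ}

theorem omegaR_single_right (x : Fin (2*n) → PowerSeries ℝ) (j : Fin (2*n)) :
    OmegaR n x (Pi.single j 1) =
      if h : j.1 < n then -x ⟨n + j, by omega⟩ else x ⟨j - n, by omega⟩ := by
  have hj := j.isLt
  unfold OmegaR
  simp only [Pi.single_apply, Fin.ext_iff]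
  split_ifs with h
  · rw [Finset.sum_eq_single ⟨j, h⟩ (fun i _ hi => ?_) (by simp)]
    · rw [if_neg (by omega), if_pos rfl]; ring
    · have : i.1 ≠ j := fun e => hi (Fin.ext e)
      rw [if_neg (by omega), if_neg this]; ring
  · rw [Finset.sum_eq_single ⟨j - n, by omega⟩ (fun i _ hi => ?_) (by simp)]
    · rw [if_pos (by simp only; omega), if_neg (by simp only; omega)]; ring
    · have : i.1 ≠ j - n := fun e => hi (Fin.ext e)
      rw [if_neg (by omega), if_neg (by omega)]; ring

def omegaForm (n : ℕ) : LinearMap.BilinForm (PowerSeries ℝ) (Fin (2*n) → PowerSeries ℝ) :=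
  LinearMap.mk₂ _ (OmegaR n)
    (fun _ _ _ => by
      simp only [OmegaR, Pi.add_apply, ← Finset.sum_add_distrib]
      exact Finset.sum_congr rfl fun _ _ => by ring)
    (fun _ _ _ => by
      simp only [OmegaR, Pi.smul_apply, smul_eq_mul, Finset.mul_sum]
      exact Finset.sum_congr rfl fun _ _ => by ring)
    (fun _ _ _ => by
      simp only [OmegaR, Pi.add_apply, ← Finset.sum_add_distrib]
      exact Finset.sum_congr rfl fun _ _ => by ring)
    (fun _ _ _ => by
      simp only [OmegaR, Pi.smul_apply, smul_eq_mul, Finset.mul_sum]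
      exact Finset.sum_congr rfl fun _ _ => by ring)

theorem omegaForm_apply (x y : Fin (2*n) → PowerSeries ℝ) : omegaForm n x y = OmegaR n x y := rfl

theorem omegaForm_isAlt : (omegaForm n).IsAlt := fun x =>
  show OmegaR n x x = 0 from Finset.sum_eq_zero fun _ _ => sub_eq_zero.2 (mul_comm _ _)

theorem omegaForm_separatingLeft : (omegaForm n).SeparatingLeft := fun x hx => by
  funext k
  have hk := k.isLt
  by_cases h : k.1 < n
  · have := hx (Pi.single ⟨n + k, by omega⟩ 1)
    rw [omegaForm_apply, omegaR_single_right, dif_neg (by simp only; omega)] at this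
    simpa using this
  · have := hx (Pi.single ⟨k - n, by omega⟩ 1)
    rw [omegaForm_apply, omegaR_single_right, dif_pos (by simp only; omega)] at this
    simpa [show n + (k.1 - n) = k by omega] using this

theorem omegaForm_surjective : Function.Surjective (omegaForm n) := fun φ => by
  refine ⟨fun k => if h : k.1 < n then φ (Pi.single ⟨n + k, by omega⟩ 1)
    else -φ (Pi.single ⟨k - n, by omega⟩ 1), (Pi.basisFun _ _).ext fun j => ?_⟩
  have hj := j.isLt
  rw [Pi.basisFun_apply, omegaForm_apply, omegaR_single_right]
  split_ifs with h h' h'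
  · simp only at h'; omega
  · simp only [neg_neg, add_tsub_cancel_left]
  · congr 2; ext; simp only; omega
  · simp only at h'; omega

end OmegaR

/-- Over `R = ℝ⟦t⟧`, a formal curve of translation-invariant symplectic
connections on `(ℝ^{2n},Ω)`, `n ≥ 2`, encoded by an `R`-linear `B : M → End_R(M)` with
`Ω_R(B(X)Y,Z)` totally symmetric, which is of Ricci type, satisfies `B(X)∘B(Y) = 0`;
in particular the formal curvature `B(X)∘B(Y) − B(Y)∘B(X)` and the formal Ricci tensor
`Tr(B(X)∘B(Y))` vanish identically. -/
theorem formal_invariant_ricci_type_is_flat (n : ℕ) (hn : 2 ≤ n)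
    (B : (Fin (2*n) → PowerSeries ℝ) →ₗ[PowerSeries ℝ]
      Module.End (PowerSeries ℝ) (Fin (2*n) → PowerSeries ℝ))
    (hsym₁ : ∀ X Y Z, OmegaR n (B X Y) Z = OmegaR n (B Y X) Z)
    (hsym₂ : ∀ X Y Z, OmegaR n (B X Y) Z = OmegaR n (B X Z) Y)
    (hRicci : ∀ X Y Z T,
      OmegaR n ((B X * B Y - B Y * B X) Z) T =
        (-(1 / (2*((n:ℝ)+1)))) •
          (2 * OmegaR n X Y * LinearMap.trace (PowerSeries ℝ) _ (B Z * B T)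
           + OmegaR n X Z * LinearMap.trace (PowerSeries ℝ) _ (B Y * B T)
           + OmegaR n X T * LinearMap.trace (PowerSeries ℝ) _ (B Y * B Z)
           - OmegaR n Y Z * LinearMap.trace (PowerSeries ℝ) _ (B X * B T)
           - OmegaR n Y T * LinearMap.trace (PowerSeries ℝ) _ (B X * B Z))) :
    (∀ X Y, B X * B Y = 0) ∧
    (∀ X Y, B X * B Y - B Y * B X = 0) ∧
    (∀ X Y, LinearMap.trace (PowerSeries ℝ) _ (B X * B Y) = 0) := by
  have hR : IsRicciType (omegaForm n) B (algebraMap ℝ _ (2 * (n + 1))) := fun X Y Z T => by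
    simp only [omegaForm_apply, ricci_apply]
    rw [hRicci, Algebra.smul_def, ← mul_assoc, ← map_mul,
      show 2 * ((n : ℝ) + 1) * -(1 / (2 * ((n : ℝ) + 1))) = -1 by field_simp, map_neg, map_one,
      neg_one_mul]
  set c := algebraMap ℝ (PowerSeries ℝ) (2 * (n + 1))
  have hC : ∀ a : ℝ, a ≠ 0 → algebraMap ℝ (PowerSeries ℝ) a ≠ 0 := fun a => (map_ne_zero _).2
  have h2 : (2 : PowerSeries ℝ) ≠ 0 := by
    rw [← map_ofNat (algebraMap ℝ _) 2]
    exact hC 2 two_ne_zero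
  have hc₂ : c + 2 ≠ 0 := by
    rw [← map_ofNat (algebraMap ℝ _) 2, ← map_add]
    exact hC _ (by positivity)
  have hc₄ : c - 4 ≠ 0 := by
    have : (2 : ℝ) ≤ n := by exact_mod_cast hn
    rw [← map_ofNat (algebraMap ℝ _) 4, ← map_sub]
    exact hC _ (by linarith : (0 : ℝ) < 2 * (n + 1) - 4).ne'
  have hBB : ∀ X Y, B X * B Y = 0 := hR.mul_eq_zero ⟨hsym₁, hsym₂⟩ omegaForm_isAlt
    omegaForm_separatingLeft omegaForm_surjective h2 (hC _ (by positivity)) hc₂ hc₄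
  exact ⟨hBB, fun X Y => by rw [hBB, hBB, sub_zero], fun X Y => by rw [hBB, map_zero]⟩
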